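/- arXiv:2411.19404 — 3 statements merged into one kernel-verified Lean document; each statement's English description precedes it below -/
import Mathlib

section
/- Let ν = −1/2. Then for every N > 0 there exist constants C, c > 0 such that p_t^ν(x,y) ≤ C (e^{−t/2}/√t) · exp(−|x−y|²/(ct)) · (1 + √t/ρ(x) + √t/ρ(y))^{−N} for all t > 0 and all x, y ∈ (0,∞), where ρ(x) = 1/(1+x). -/
open MeasureTheory Real Set ENNReal NNReal

noncomputable section

/-- Modified Bessel function of imaginary argument `I_α(z)`. -/
def besselI (α z : ℝ) : ℝ :=
  ∑' k : ℕ, (z / 2) ^ (α + 2 * (k : ℝ)) / ((k.factorial : ℝ) * Real.Gamma (α + (k : ℝ) + 1))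

/-- One-dimensional Laguerre heat kernel `p_t^ν(x,y)`, with `r = e^{-4t}`. -/
def heatKernel (ν t x y : ℝ) : ℝ :=
  (2 * Real.sqrt (Real.exp (-(4 * t)) * x * y) / (1 - Real.exp (-(4 * t)))) *
    Real.exp (-(1 / 2) * ((1 + Real.exp (-(4 * t))) / (1 - Real.exp (-(4 * t)))) *
      (x ^ 2 + y ^ 2)) *
    besselI ν (2 * Real.sqrt (Real.exp (-(4 * t))) / (1 - Real.exp (-(4 * t))) * (x * y))

/-- `γ_ν = -1/2 - ν` for `-1 < ν < -1/2`, and `γ_ν = 0` for `ν ≥ -1/2`. -/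
def gam (ν : ℝ) : ℝ := if ν < -(1 / 2) then -(1 / 2) - ν else 0

/-- n-dimensional Laguerre heat kernel. -/
def heatKernelN {n : ℕ} (ν : Fin n → ℝ) (t : ℝ) (x y : Fin n → ℝ) : ℝ :=
  ∏ j, heatKernel (ν j) t (x j) (y j)

/-- `γ_ν = max_j γ_{ν_j}` for a multi-index. -/
def gamN {n : ℕ} (ν : Fin n → ℝ) : ℝ := ⨆ j, gam (ν j)

/-- The positive orthant `ℝ^n_+ = (0,∞)^n`. -/
def posOrthant (n : ℕ) : Set (Fin n → ℝ) := {x | ∀ i, 0 < x i}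

/-- Squared Euclidean distance. -/
def sqDist {n : ℕ} (x y : Fin n → ℝ) : ℝ := ∑ i, (x i - y i) ^ 2

/-- Euclidean ball in `Fin n → ℝ`. -/
def eBall {n : ℕ} (z : Fin n → ℝ) (ρ : ℝ) : Set (Fin n → ℝ) := {x | sqDist x z < ρ ^ 2}

/-- Muckenhoupt class `A_q(ℝ^n_+)` (for `q > 1`). -/
def MuckA {n : ℕ} (q : ℝ) (w : (Fin n → ℝ) → ℝ) : Prop :=
  ∃ C : ℝ, ∀ (z : Fin n → ℝ) (ρ : ℝ), 0 < ρ → eBall z ρ ⊆ posOrthant n →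
    (⨍ x in eBall z ρ, w x) * (⨍ x in eBall z ρ, w x ^ (-(1 / (q - 1)))) ^ (q - 1) ≤ C

/-- Reverse Hölder class `RH_s(ℝ^n_+)` (trivial for `s = 1`). -/
def RevHolder {n : ℕ} (s : ℝ) (w : (Fin n → ℝ) → ℝ) : Prop :=
  ∃ C : ℝ, ∀ (z : Fin n → ℝ) (ρ : ℝ), 0 < ρ → eBall z ρ ⊆ posOrthant n →
    (⨍ x in eBall z ρ, w x ^ s) ^ (1 / s) ≤ C * ⨍ x in eBall z ρ, w x

/-- The exponent `(1/(pγ))'`, with the conventions `1/0 = ∞` and `∞' = 1`. -/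
def rhIndex (p γ : ℝ) : ℝ := if γ = 0 then 1 else (1 / (p * γ)) / (1 / (p * γ) - 1)

/-- Weighted `L^p` "norm" on `ℝ^n_+`. -/
def wLp {n : ℕ} (p : ℝ) (w f : (Fin n → ℝ) → ℝ) : ℝ≥0∞ :=
  (∫⁻ x in posOrthant n, ENNReal.ofReal (|f x| ^ p * w x)) ^ (1 / p)

/-- Muckenhoupt class `A_q(ℝ_+)` in dimension one. -/
def MuckA1 (q : ℝ) (w : ℝ → ℝ) : Prop :=
  ∃ C : ℝ, ∀ (z ρ : ℝ), 0 < ρ → Metric.ball z ρ ⊆ Ioi (0 : ℝ) →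
    (⨍ x in Metric.ball z ρ, w x) *
      (⨍ x in Metric.ball z ρ, w x ^ (-(1 / (q - 1)))) ^ (q - 1) ≤ C

/-- Reverse Hölder class `RH_s(ℝ_+)` in dimension one. -/
def RevHolder1 (s : ℝ) (w : ℝ → ℝ) : Prop :=
  ∃ C : ℝ, ∀ (z ρ : ℝ), 0 < ρ → Metric.ball z ρ ⊆ Ioi (0 : ℝ) →
    (⨍ x in Metric.ball z ρ, w x ^ s) ^ (1 / s) ≤ C * ⨍ x in Metric.ball z ρ, w x

/-- Weighted `L^p` "norm" on `ℝ_+`. -/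
def wLp1 (p : ℝ) (w f : ℝ → ℝ) : ℝ≥0∞ :=
  (∫⁻ x in Ioi (0 : ℝ), ENNReal.ofReal (|f x| ^ p * w x)) ^ (1 / p)

/-- `ν + e_j`. -/
def addE {n : ℕ} (ν : Fin n → ℝ) (j : Fin n) : Fin n → ℝ :=
  fun i => if i = j then ν i + 1 else ν i

/-- `δ_j p_t^ν(x,y)`, the Laguerre derivative in the j-th coordinate of x. -/
def deltaHeatN {n : ℕ} (ν : Fin n → ℝ) (j : Fin n) (t : ℝ) (x y : Fin n → ℝ) : ℝ :=
  deriv (fun u => heatKernelN ν t (Function.update x j u) y) (x j)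
    + (x j - (ν j + 1 / 2) / x j) * heatKernelN ν t x y

/-- `δ p_t^ν(x,y)` in dimension one. -/
def deltaHeat1 (ν t x y : ℝ) : ℝ :=
  deriv (fun u => heatKernel ν t u y) x + (x - (ν + 1 / 2) / x) * heatKernel ν t x y


set_option maxHeartbeats 1000000

lemma myGamma_nat_add_half (k : ℕ) :
    Real.Gamma ((k : ℝ) + 1/2) = Real.sqrt π * (2*k).factorial / (4^k * k.factorial) := by
  induction k with
  | zero =>
    rw [show ((0:ℕ):ℝ) + 1/2 = 1/2 by norm_num, Real.Gamma_one_half_eq]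
    simp
  | succ n ih =>
    have h1 : ((n+1 : ℕ) : ℝ) + 1/2 = ((n:ℝ) + 1/2) + 1 := by push_cast; ring
    have hne : ((n:ℝ) + 1/2) ≠ 0 := by positivity
    rw [h1, Real.Gamma_add_one hne, ih]
    have e1 : (((2*(n+1)).factorial : ℕ) : ℝ) = (2*(n:ℝ)+2)*(2*(n:ℝ)+1)*(2*n).factorial := by
      rw [show 2*(n+1) = (2*n+1)+1 by ring, Nat.factorial_succ, Nat.factorial_succ]
      push_cast; ring
    have e2 : (((n+1).factorial : ℕ) : ℝ) = ((n:ℝ)+1)*n.factorial := by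
      rw [Nat.factorial_succ]; push_cast; ring
    rw [e1, e2]
    have h3 : ((4:ℝ)^(n+1)) = 4*4^n := by ring
    rw [h3]
    have h4 : ((4:ℝ)^n) ≠ 0 := by positivity
    have h5 : ((n.factorial : ℕ) : ℝ) ≠ 0 := by positivity
    field_simp
    ring

lemma my_pow_le_exp (M : ℕ) {x : ℝ} (hx : 0 ≤ x) : x ^ M / M.factorial ≤ Real.exp x := by
  calc x ^ M / M.factorial ≤ ∑ i ∈ Finset.range (M+1), x ^ i / i.factorial := by
        refine Finset.single_le_sum (f := fun i => x ^ i / i.factorial) ?_ (Finset.self_mem_range_succ M)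
        intro i _; positivity
    _ ≤ Real.exp x := Real.sum_le_exp_of_nonneg hx _

lemma my_pow_le_exp' (M : ℕ) {δ b : ℝ} (hδ : 0 < δ) (hb : 0 ≤ b) :
    b ^ M ≤ (M.factorial / δ^M) * Real.exp (δ * b) := by
  have h := my_pow_le_exp M (x := δ * b) (by positivity)
  rw [mul_pow] at h
  have hδM : (0:ℝ) < δ ^ M := by positivity
  have hf : (0:ℝ) < M.factorial := Nat.cast_pos.mpr M.factorial_pos
  have h2 : δ^M * b^M ≤ M.factorial * Real.exp (δ*b) := by
    rw [div_le_iff₀ hf] at h; linarith [h]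
  rw [div_mul_eq_mul_div, le_div_iff₀ hδM]
  nlinarith [h2]

lemma poly_bound (N : ℝ) (hN : 0 < N) : ∃ A : ℝ, 0 < A ∧
    ∀ t s : ℝ, 0 < t → 0 ≤ s →
      Real.exp (-(t/4) - (1 - Real.exp (-(2*t))) * s^2 / 8) ≤
        A * (1 + Real.sqrt t * (2 + s)) ^ (-N) := by
  set M : ℕ := ⌈N⌉₊ with hM
  refine ⟨2^M * ((2*M).factorial / ((1/32:ℝ))^(2*M)) * ((M.factorial : ℝ) / ((1/16:ℝ))^M)
    * Real.exp (1/32) * Real.exp (1/16), by positivity, ?_⟩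
  set A := 2^M * (((2*M).factorial : ℝ) / ((1/32:ℝ))^(2*M)) * ((M.factorial : ℝ) / ((1/16:ℝ))^M)
    * Real.exp (1/32) * Real.exp (1/16) with hA
  intro t s ht hs
  have hA0 : 0 < A := by rw [hA]; positivity
  set q := Real.exp (-(2*t)) with hq
  have hq0 : 0 < q := Real.exp_pos _
  have hq1 : q < 1 := by rw [hq, Real.exp_lt_one_iff]; linarith
  set w := (1 - q) * s^2 with hw
  have hw0 : 0 ≤ w := mul_nonneg (by linarith) (sq_nonneg s)
  set S := 1 + Real.sqrt t * (2 + s) with hS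
  have hst : 0 ≤ Real.sqrt t := Real.sqrt_nonneg t
  have hS1 : 1 ≤ S := by rw [hS]; nlinarith
  have hS0 : 0 < S := by linarith
  -- t*s^2 ≤ (1+t)*w
  have hqt : q * (1 + t) ≤ 1 := by
    have h1 : 1 + 2*t ≤ Real.exp (2*t) := by linarith [Real.add_one_le_exp (2*t)]
    have h2 : q * Real.exp (2*t) = 1 := by rw [hq, ← Real.exp_add]; norm_num
    nlinarith
  have hts : t * s^2 ≤ (1 + t) * w := by
    rw [hw]
    have : t ≤ (1+t)*(1-q) := by nlinarith
    nlinarith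
  -- S^2 ≤ 2*(1+8t)^2*(1+2w)
  have h1 : S^2 ≤ 2*(1+8*t)^2*(1+2*w) := by
    have hsq : Real.sqrt t ^ 2 = t := Real.sq_sqrt ht.le
    have e1 : S^2 ≤ 2 + 2*t*(2+s)^2 := by nlinarith [sq_nonneg (1 - Real.sqrt t * (2+s))]
    have e2 : (2+s)^2 ≤ 2*(4+s^2) := by nlinarith [sq_nonneg (2-s)]
    have e3 : S^2 ≤ 2 + 16*t + 4*(t*s^2) := by nlinarith
    nlinarith [mul_nonneg (mul_nonneg ht.le hw0) ht.le, mul_nonneg ht.le hw0]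
  have h2 : S^(2*M) ≤ 2^M * (1+8*t)^(2*M) * (1+2*w)^M := by
    calc S^(2*M) = (S^2)^M := by rw [← pow_mul]
      _ ≤ (2*(1+8*t)^2*(1+2*w))^M := pow_le_pow_left₀ (sq_nonneg S) h1 M
      _ = 2^M * (1+8*t)^(2*M) * (1+2*w)^M := by rw [mul_pow, mul_pow, ← pow_mul]
  have h3 : (1+8*t)^(2*M) ≤ ((2*M).factorial / ((1/32:ℝ))^(2*M)) * (Real.exp (1/32) * Real.exp (t/4)) := by
    have := my_pow_le_exp' (2*M) (δ := 1/32) (b := 1+8*t) (by norm_num) (by linarith)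
    rwa [show (1/32:ℝ)*(1+8*t) = 1/32 + t/4 by ring, Real.exp_add] at this
  have h4 : (1+2*w)^M ≤ ((M.factorial : ℝ) / ((1/16:ℝ))^M) * (Real.exp (1/16) * Real.exp (w/8)) := by
    have := my_pow_le_exp' M (δ := 1/16) (b := 1+2*w) (by norm_num) (by linarith)
    rwa [show (1/16:ℝ)*(1+2*w) = 1/16 + w/8 by ring, Real.exp_add] at this
  have h5 : S^M ≤ A * (Real.exp (t/4) * Real.exp (w/8)) := by
    calc S^M ≤ S^(2*M) := pow_le_pow_right₀ hS1 (by omega)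
      _ ≤ 2^M * (1+8*t)^(2*M) * (1+2*w)^M := h2
      _ ≤ 2^M * (((2*M).factorial / ((1/32:ℝ))^(2*M)) * (Real.exp (1/32) * Real.exp (t/4)))
            * (((M.factorial : ℝ) / ((1/16:ℝ))^M) * (Real.exp (1/16) * Real.exp (w/8))) := by
          have p1 : (0:ℝ) ≤ 2^M := by positivity
          have p2 : (0:ℝ) ≤ (1+8*t)^(2*M) := by positivity
          gcongr
      _ = A * (Real.exp (t/4) * Real.exp (w/8)) := by rw [hA]; ring
  -- conclude
  have hrpow : (S^M)⁻¹ ≤ S ^ (-N) := by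
    have e : S ^ (-(M:ℝ)) = (S^M)⁻¹ := by
      rw [Real.rpow_neg hS0.le, Real.rpow_natCast]
    rw [← e]
    exact Real.rpow_le_rpow_of_exponent_le hS1 (by simpa using neg_le_neg (Nat.le_ceil N))
  have hSM : 0 < S^M := by positivity
  have key : Real.exp (-(t/4)) * Real.exp (-(w/8)) ≤ A * (S^M)⁻¹ := by
    rw [← Real.exp_add, show -(t/4) + -(w/8) = -(t/4 + w/8) by ring]
    have hE : Real.exp (t/4) * Real.exp (w/8) = Real.exp (t/4 + w/8) := (Real.exp_add _ _).symm
    rw [hE] at h5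
    have : Real.exp (-(t/4 + w/8)) = (Real.exp (t/4 + w/8))⁻¹ := by
      rw [Real.exp_neg]
    rw [this]
    calc (Real.exp (t/4 + w/8))⁻¹ = A * (A * Real.exp (t/4 + w/8))⁻¹ := by
          field_simp
      _ ≤ A * (S^M)⁻¹ := by gcongr
  calc Real.exp (-(t/4) - (1 - q) * s^2 / 8) = Real.exp (-(t/4)) * Real.exp (-(w/8)) := by
        rw [← Real.exp_add, hw]; ring_nf
    _ ≤ A * (S^M)⁻¹ := key
    _ ≤ A * S^(-N) := by gcongr

lemma besselI_neg_half {z : ℝ} (hz : 0 < z) :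
    besselI (-(1/2)) z = Real.sqrt (2/(π*z)) * Real.cosh z := by
  have h2 : (0:ℝ) < z/2 := by linarith
  have hπ : (0:ℝ) < π := Real.pi_pos
  have hsz : (0:ℝ) < Real.sqrt z := Real.sqrt_pos.mpr hz
  have hsπ : (0:ℝ) < Real.sqrt π := Real.sqrt_pos.mpr hπ
  have hsqrt : Real.sqrt (2/(π*z)) = Real.sqrt 2 / (Real.sqrt π * Real.sqrt z) := by
    rw [Real.sqrt_div' 2 (by positivity), Real.sqrt_mul hπ.le]
  have hterm : ∀ k : ℕ, (z/2) ^ ((-(1/2):ℝ) + 2*(k:ℝ)) / ((k.factorial : ℝ) * Real.Gamma (-(1/2) + (k:ℝ) + 1))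
      = Real.sqrt (2/(π*z)) * (z ^ (2*k) / ((2*k).factorial : ℝ)) := by
    intro k
    have hg : Real.Gamma (-(1/2) + (k:ℝ) + 1) = Real.sqrt π * (2*k).factorial / (4^k * k.factorial) := by
      rw [show (-(1/2):ℝ) + (k:ℝ) + 1 = (k:ℝ) + 1/2 by ring, myGamma_nat_add_half]
    have hpow : (z/2) ^ ((-(1/2):ℝ) + 2*(k:ℝ)) = (Real.sqrt 2 / Real.sqrt z) * (z^(2*k) / 4^k) := by
      rw [Real.rpow_add h2]
      have ha : (z/2) ^ ((-(1/2)):ℝ) = Real.sqrt 2 / Real.sqrt z := by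
        rw [Real.rpow_neg h2.le, ← Real.sqrt_eq_rpow, Real.sqrt_div hz.le 2]
        rw [inv_div]
      have hb : (z/2) ^ ((2*(k:ℝ)):ℝ) = z^(2*k) / 4^k := by
        rw [show (2*(k:ℝ)) = ((2*k : ℕ) : ℝ) by push_cast; ring, Real.rpow_natCast,
          div_pow, show ((2:ℝ))^(2*k) = 4^k by rw [pow_mul]; norm_num]
      rw [ha, hb]
    rw [hg, hpow, hsqrt]
    have h4 : ((4:ℝ)^k) ≠ 0 := by positivity
    have h5 : ((k.factorial : ℕ) : ℝ) ≠ 0 := by positivity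
    have h6 : (((2*k).factorial : ℕ) : ℝ) ≠ 0 := by positivity
    field_simp
  unfold besselI
  rw [tsum_congr hterm, _root_.tsum_mul_left, Real.cosh_eq_tsum]


/-- heat kernel upper bound for `ν = -1/2`, with `ρ(x) = 1/(1+x)`. -/
theorem heat_kernel_bound_nu_eq (N : ℝ) (hN : 0 < N) :
    ∃ C c : ℝ, 0 < C ∧ 0 < c ∧ ∀ t x y : ℝ, 0 < t → 0 < x → 0 < y →
      heatKernel (-(1 / 2)) t x y ≤
        C * (Real.exp (-t / 2) / Real.sqrt t) * Real.exp (-|x - y| ^ 2 / (c * t)) *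
          (1 + Real.sqrt t / (1 / (1 + x)) + Real.sqrt t / (1 / (1 + y))) ^ (-N) := by
  obtain ⟨A, hA0, hAbound⟩ := poly_bound N hN
  refine ⟨(2 * Real.sqrt 2 / Real.sqrt π) * A, 8, by positivity, by norm_num, ?_⟩
  intro t x y ht hx hy
  have hπ : (0:ℝ) < π := Real.pi_pos
  have hsπ : (0:ℝ) < Real.sqrt π := Real.sqrt_pos.mpr hπ
  have hst : (0:ℝ) < Real.sqrt t := Real.sqrt_pos.mpr ht
  set q := Real.exp (-(2*t)) with hq
  have hq0 : 0 < q := Real.exp_pos _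
  have hq1 : q < 1 := by rw [hq, Real.exp_lt_one_iff]; linarith
  have hq2 : Real.exp (-(4*t)) = q^2 := by
    rw [hq, sq, ← Real.exp_add]; congr 1; ring
  have h1mq : 0 < 1 - q := by linarith
  have h1pq : 0 < 1 + q := by linarith
  have h1mq2 : 0 < 1 - q^2 := by nlinarith
  -- rewrite the target polynomial factor
  have hxx : Real.sqrt t / (1 / (1 + x)) = Real.sqrt t * (1 + x) := by
    field_simp
  have hyy : Real.sqrt t / (1 / (1 + y)) = Real.sqrt t * (1 + y) := by
    field_simp
  rw [hxx, hyy]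
  set S := 1 + Real.sqrt t * (1 + x) + Real.sqrt t * (1 + y) with hS
  have hSeq : S = 1 + Real.sqrt t * (2 + (x + y)) := by rw [hS]; ring
  -- the Bessel argument
  set zv := 2 * Real.sqrt (Real.exp (-(4*t))) / (1 - Real.exp (-(4*t))) * (x * y) with hzv
  have hzv' : zv = 2 * q / (1 - q^2) * (x * y) := by
    rw [hzv, hq2, Real.sqrt_sq hq0.le]
  have hzv0 : 0 < zv := by rw [hzv']; positivity
  -- unfold the kernel
  have hker : heatKernel (-(1/2)) t x y =
      (2 * Real.sqrt (q^2 * x * y) / (1 - q^2)) *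
        Real.exp (-(1/2) * ((1 + q^2) / (1 - q^2)) * (x^2 + y^2)) *
        (Real.sqrt (2 / (π * zv)) * Real.cosh zv) := by
    rw [heatKernel, besselI_neg_half hzv0, hq2]
  set Pref := 2 * Real.sqrt (q^2 * x * y) / (1 - q^2) with hPref
  set E := -(1/2) * ((1 + q^2) / (1 - q^2)) * (x^2 + y^2) with hE
  have hPref0 : 0 ≤ Pref := by positivity
  -- prefactor bound
  set T := (2 * Real.sqrt 2 / Real.sqrt π) * (Real.exp (-t/2) / Real.sqrt t) * Real.exp (-(t/4))
    with hT
  have hT0 : 0 ≤ T := by positivity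
  have hP : Pref * Real.sqrt (2 / (π * zv)) ≤ T := by
    have hrad : Pref ^ 2 * (2 / (π * zv)) = 4 * q / (π * (1 - q^2)) := by
      rw [hPref, hzv', div_pow, mul_pow, Real.sq_sqrt (by positivity : (0:ℝ) ≤ q^2 * x * y)]
      field_simp
      ring
    have step1 : Pref * Real.sqrt (2 / (π * zv)) = Real.sqrt (4 * q / (π * (1 - q^2))) := by
      rw [← hrad, ← Real.sqrt_sq hPref0, ← Real.sqrt_mul (by positivity) , Real.sqrt_sq hPref0]
    have hT2 : T^2 = 8 * Real.exp (-(3*t/2)) / (π * t) := by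
      have e1 : Real.exp (-t/2)^2 = Real.exp (-t) := by
        rw [sq, ← Real.exp_add]; congr 1; ring
      have e2 : Real.exp (-(t/4))^2 = Real.exp (-(t/2)) := by
        rw [sq, ← Real.exp_add]; congr 1; ring
      have e3 : Real.exp (-t) * Real.exp (-(t/2)) = Real.exp (-(3*t/2)) := by
        rw [← Real.exp_add]; congr 1; ring
      have h8 : (2 * Real.sqrt 2)^2 = 8 := by
        rw [mul_pow, Real.sq_sqrt (by norm_num : (0:ℝ) ≤ 2)]; norm_num
      have expand : T^2 = (2 * Real.sqrt 2)^2 / (Real.sqrt π)^2 *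
          (Real.exp (-t/2)^2 / (Real.sqrt t)^2) * Real.exp (-(t/4))^2 := by
        rw [hT]; ring
      rw [expand, h8, Real.sq_sqrt hπ.le, Real.sq_sqrt ht.le, e1, e2, ← e3]
      field_simp
    have hcore : 4 * q / (π * (1 - q^2)) ≤ 8 * Real.exp (-(3*t/2)) / (π * t) := by
      rw [div_le_div_iff₀ (by positivity) (by positivity)]
      -- 4*q*(π*t) ≤ 8*exp(-(3t/2))*(π*(1-q²))
      have k1 : 1 + t/2 ≤ Real.exp (t/2) := by linarith [Real.add_one_le_exp (t/2)]
      have k2 : Real.exp (-(7*t/2)) ≤ 1 := Real.exp_le_one_iff.mpr (by linarith)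
      have kt : t ≤ 2 * (Real.exp (t/2) - Real.exp (-(7*t/2))) := by nlinarith
      have E1 : q * Real.exp (t/2) = Real.exp (-(3*t/2)) := by
        rw [hq, ← Real.exp_add]; congr 1; ring
      have E2 : Real.exp (-(3*t/2)) * q^2 = q * Real.exp (-(7*t/2)) := by
        rw [hq]
        simp only [sq, ← Real.exp_add]
        congr 1; ring
      have kq : q * t ≤ 2 * (Real.exp (-(3*t/2)) - Real.exp (-(3*t/2)) * q^2) := by
        calc q * t ≤ q * (2 * (Real.exp (t/2) - Real.exp (-(7*t/2)))) :=
              mul_le_mul_of_nonneg_left kt hq0.le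
          _ = 2 * (q * Real.exp (t/2)) - 2 * (q * Real.exp (-(7*t/2))) := by ring
          _ = 2 * (Real.exp (-(3*t/2)) - Real.exp (-(3*t/2)) * q^2) := by
              rw [E1, ← E2]; ring
      nlinarith [mul_le_mul_of_nonneg_left kq hπ.le]
    calc Pref * Real.sqrt (2 / (π * zv)) = Real.sqrt (4 * q / (π * (1 - q^2))) := step1
      _ ≤ Real.sqrt (8 * Real.exp (-(3*t/2)) / (π * t)) := Real.sqrt_le_sqrt hcore
      _ = Real.sqrt (T^2) := by rw [hT2]
      _ = T := Real.sqrt_sq hT0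
  -- exponential part
  have hcosh : Real.cosh zv ≤ Real.exp zv := by
    rw [Real.cosh_eq]
    have : Real.exp (-zv) ≤ Real.exp zv := Real.exp_le_exp.mpr (by linarith)
    linarith [Real.exp_pos zv]
  have idE : E + zv = -((1+q)/(4*(1-q)) * (x-y)^2) - ((1-q)/(4*(1+q)) * (x+y)^2) := by
    rw [hE, hzv']
    have hne1 : (1 - q^2) ≠ 0 := ne_of_gt h1mq2
    have hne2 : (1 - q) ≠ 0 := ne_of_gt h1mq
    have hne3 : (1 + q) ≠ 0 := ne_of_gt h1pq
    field_simp
    ring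
  have hG1 : (x-y)^2 / (8*t) ≤ (1+q)/(4*(1-q)) * (x-y)^2 := by
    have h2t : 1 - q ≤ 2*t := by nlinarith [Real.add_one_le_exp (-(2*t))]
    have hcoef : 1/(8*t) ≤ (1+q)/(4*(1-q)) := by
      rw [div_le_div_iff₀ (by positivity) (by positivity)]
      nlinarith
    calc (x-y)^2 / (8*t) = 1/(8*t) * (x-y)^2 := by ring
      _ ≤ (1+q)/(4*(1-q)) * (x-y)^2 := mul_le_mul_of_nonneg_right hcoef (sq_nonneg _)
  have hG2 : (1-q) * (x+y)^2 / 8 ≤ (1-q)/(4*(1+q)) * (x+y)^2 := by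
    have hcoef : (1-q)/8 ≤ (1-q)/(4*(1+q)) := by
      apply div_le_div_of_nonneg_left h1mq.le (by positivity)
      nlinarith
    calc (1-q) * (x+y)^2 / 8 = (1-q)/8 * (x+y)^2 := by ring
      _ ≤ (1-q)/(4*(1+q)) * (x+y)^2 := mul_le_mul_of_nonneg_right hcoef (sq_nonneg _)
  have hexp : Real.exp E * Real.cosh zv ≤
      Real.exp (-((x-y)^2/(8*t))) * Real.exp (-((1-q)*(x+y)^2/8)) := by
    calc Real.exp E * Real.cosh zv ≤ Real.exp E * Real.exp zv :=
          mul_le_mul_of_nonneg_left hcosh (Real.exp_nonneg _)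
      _ = Real.exp (E + zv) := (Real.exp_add _ _).symm
      _ ≤ Real.exp (-((x-y)^2/(8*t))) * Real.exp (-((1-q)*(x+y)^2/8)) := by
          rw [← Real.exp_add, Real.exp_le_exp, idE]
          linarith
  -- polynomial factor
  have hpoly : Real.exp (-(t/4)) * Real.exp (-((1-q)*(x+y)^2/8)) ≤ A * S ^ (-N) := by
    have := hAbound t (x+y) ht (by positivity)
    rw [← hSeq] at this
    calc Real.exp (-(t/4)) * Real.exp (-((1-q)*(x+y)^2/8))
        = Real.exp (-(t/4) - (1 - Real.exp (-(2*t))) * (x+y)^2 / 8) := by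
          rw [← Real.exp_add, ← hq]; ring_nf
      _ ≤ A * S ^ (-N) := this
  -- final assembly
  have hSpos : (0:ℝ) < S := by nlinarith [Real.sqrt_nonneg t]
  have hrw1 : -t/2 = -(t/2) := by ring
  have hrw2 : -|x-y|^2 / (8*t) = -((x-y)^2/(8*t)) := by rw [sq_abs]; ring
  calc heatKernel (-(1/2)) t x y
      = (Pref * Real.sqrt (2 / (π * zv))) * (Real.exp E * Real.cosh zv) := by
        rw [hker]; ring
    _ ≤ T * (Real.exp (-((x-y)^2/(8*t))) * Real.exp (-((1-q)*(x+y)^2/8))) := by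
        apply mul_le_mul hP hexp _ hT0
        positivity
    _ = (2 * Real.sqrt 2 / Real.sqrt π) * (Real.exp (-t/2) / Real.sqrt t) *
          Real.exp (-((x-y)^2/(8*t))) *
          (Real.exp (-(t/4)) * Real.exp (-((1-q)*(x+y)^2/8))) := by rw [hT]; ring
    _ ≤ (2 * Real.sqrt 2 / Real.sqrt π) * (Real.exp (-t/2) / Real.sqrt t) *
          Real.exp (-((x-y)^2/(8*t))) * (A * S ^ (-N)) := by
        apply mul_le_mul_of_nonneg_left hpoly
        positivity
    _ = (2 * Real.sqrt 2 / Real.sqrt π) * A * (Real.exp (-t/2) / Real.sqrt t) *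
          Real.exp (-|x-y|^2 / (8*t)) * S ^ (-N) := by
        rw [hrw2]; ring

end
end

section
/- For every α > −1 and every z > 0, one has |I_α(z) − I_{α+1}(z)| < (4α + 6) · I_{α+1}(z)/z. -/
open MeasureTheory Real Set ENNReal NNReal

noncomputable section

set_option maxHeartbeats 1000000

def bt (α z : ℝ) (k : ℕ) : ℝ :=
  (z / 2) ^ (α + 2 * (k : ℝ)) / ((k.factorial : ℝ) * Real.Gamma (α + (k : ℝ) + 1))

lemma besselI_eq_tsum (α z : ℝ) : besselI α z = ∑' k, bt α z k := rfl

lemma bt_pos {α z : ℝ} (hα : -1 < α) (hz : 0 < z) (k : ℕ) : 0 < bt α z k := by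
  have hk : (0:ℝ) ≤ (k:ℝ) := Nat.cast_nonneg k
  have ht : (0:ℝ) < z / 2 := by linarith
  have hg : 0 < Real.Gamma (α + (k:ℝ) + 1) := Real.Gamma_pos_of_pos (by linarith)
  have hf : (0:ℝ) < (k.factorial : ℝ) := by positivity
  exact div_pos (Real.rpow_pos_of_pos ht _) (by positivity)

lemma bt_succ {α z : ℝ} (hα : -1 < α) (hz : 0 < z) (k : ℕ) :
    bt α z (k+1) = bt α z k * ((z/2)^(2:ℝ) / (((k:ℝ)+1) * (α+(k:ℝ)+1))) := by
  have hk : (0:ℝ) ≤ (k:ℝ) := Nat.cast_nonneg k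
  have ht : (0:ℝ) < z / 2 := by linarith
  have hg : 0 < Real.Gamma (α + (k:ℝ) + 1) := Real.Gamma_pos_of_pos (by linarith)
  have hf : (0:ℝ) < (k.factorial : ℝ) := by positivity
  unfold bt
  have e1 : α + 2 * ((k+1 : ℕ) : ℝ) = (α + 2 * (k:ℝ)) + 2 := by push_cast; ring
  have e2 : ((k+1 : ℕ).factorial : ℝ) = ((k:ℝ)+1) * (k.factorial : ℝ) := by
    rw [Nat.factorial_succ]; push_cast; ring
  have e3 : α + ((k+1 : ℕ) : ℝ) + 1 = (α + (k:ℝ) + 1) + 1 := by push_cast; ring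
  rw [e1, e2, e3, Real.rpow_add ht, Real.Gamma_add_one (by linarith)]
  field_simp

lemma bt_summable {α z : ℝ} (hα : -1 < α) (hz : 0 < z) : Summable (bt α z) := by
  apply summable_of_ratio_norm_eventually_le (r := 1/2) (by norm_num)
  filter_upwards [Filter.eventually_ge_atTop ⌈2*(z/2)^(2:ℝ)⌉₊] with k hk
  have hk0 : (0:ℝ) ≤ (k:ℝ) := Nat.cast_nonneg k
  have ht : (0:ℝ) < z / 2 := by linarith
  have hpos := bt_pos hα hz k
  have hpos1 := bt_pos hα hz (k+1)
  rw [Real.norm_of_nonneg hpos.le, Real.norm_of_nonneg hpos1.le, bt_succ hα hz k]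
  have hkc : (2*(z/2)^(2:ℝ) : ℝ) ≤ (k:ℝ) := le_trans (Nat.le_ceil _) (by exact_mod_cast hk)
  have ht2 : (0:ℝ) < (z/2)^(2:ℝ) := Real.rpow_pos_of_pos ht _
  have h1 : (z/2)^(2:ℝ) / (((k:ℝ)+1) * (α+(k:ℝ)+1)) ≤ 1/2 := by
    rw [div_le_iff₀ (by nlinarith)]
    nlinarith
  calc bt α z k * ((z/2)^(2:ℝ) / (((k:ℝ)+1) * (α+(k:ℝ)+1)))
      ≤ bt α z k * (1/2) := by nlinarith
    _ = 1/2 * bt α z k := by ring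

lemma besselI_pos {α z : ℝ} (hα : -1 < α) (hz : 0 < z) : 0 < besselI α z := by
  rw [besselI_eq_tsum]
  exact Summable.tsum_pos (bt_summable hα hz) (fun k => (bt_pos hα hz k).le) 0 (bt_pos hα hz 0)

lemma besselI_crude {μ z : ℝ} (hμ : -1 < μ) (hz : 0 < z) :
    besselI (μ+1) z ≤ z/(2*(μ+1)) * besselI μ z := by
  have hμ1 : (0:ℝ) < μ + 1 := by linarith
  have ht : (0:ℝ) < z / 2 := by linarith
  rw [besselI_eq_tsum, besselI_eq_tsum, ← _root_.tsum_mul_left]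
  refine Summable.tsum_le_tsum (fun k => ?_) (bt_summable (by linarith) hz) ((bt_summable hμ hz).mul_left _)
  have hk0 : (0:ℝ) ≤ (k:ℝ) := Nat.cast_nonneg k
  have hg : 0 < Real.Gamma (μ + (k:ℝ) + 1) := Real.Gamma_pos_of_pos (by linarith)
  have hf : (0:ℝ) < (k.factorial : ℝ) := by positivity
  unfold bt
  rw [show (μ+1) + 2*(k:ℝ) = (μ + 2*(k:ℝ)) + 1 by ring, Real.rpow_add_one (ne_of_gt ht),
    show (μ+1) + (k:ℝ) + 1 = (μ + (k:ℝ) + 1) + 1 by ring,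
    Real.Gamma_add_one (s := μ + (k:ℝ) + 1) (by linarith)]
  have hX : 0 < (z/2) ^ (μ + 2*(k:ℝ)) := Real.rpow_pos_of_pos ht _
  have step : (z/2) ^ (μ + 2*(k:ℝ)) * (z/2) / ((k.factorial:ℝ) * ((μ + (k:ℝ) + 1) * Real.Gamma (μ + (k:ℝ) + 1)))
      ≤ (z/2) ^ (μ + 2*(k:ℝ)) * (z/2) / ((k.factorial:ℝ) * ((μ + 1) * Real.Gamma (μ + (k:ℝ) + 1))) := by
    have hd1 : (0:ℝ) < (k.factorial:ℝ) * ((μ + 1) * Real.Gamma (μ + (k:ℝ) + 1)) := by positivity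
    exact div_le_div_of_nonneg_left (by positivity) hd1 (by nlinarith)
  refine le_trans step (le_of_eq ?_)
  field_simp

lemma besselI_rec {α z : ℝ} (hα : -1 < α) (hz : 0 < z) :
    besselI α z = besselI (α+2) z + (2*(α+1)/z) * besselI (α+1) z := by
  have ht : (0:ℝ) < z / 2 := by linarith
  have hzne : z ≠ 0 := ne_of_gt hz
  have hs1 := bt_summable hα hz
  have hs2 := bt_summable (show (-1:ℝ) < α+1 by linarith) hz
  have hs3 := bt_summable (show (-1:ℝ) < α+2 by linarith) hz
  have key : ∀ k : ℕ, bt α z (k+1) - (2*(α+1)/z) * bt (α+1) z (k+1) = bt (α+2) z k := by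
    intro k
    have hk0 : (0:ℝ) ≤ (k:ℝ) := Nat.cast_nonneg k
    have hg : Real.Gamma (α + (k:ℝ) + 2) ≠ 0 := ne_of_gt (Real.Gamma_pos_of_pos (by linarith))
    have h2 : α + (k:ℝ) + 2 ≠ 0 := ne_of_gt (by linarith)
    have hfk : (k.factorial : ℝ) ≠ 0 := by positivity
    have hk1 : ((k:ℝ)+1) ≠ 0 := by positivity
    have hf' : (((k+1).factorial:ℝ)) = ((k:ℝ)+1) * (k.factorial : ℝ) := by
      rw [Nat.factorial_succ]; push_cast; ring
    have htne : (z/2) ≠ 0 := ne_of_gt ht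
    unfold bt
    rw [show α + 2*((k+1:ℕ):ℝ) = (α+2) + 2*(k:ℝ) by push_cast; ring,
      show (α+1) + 2*((k+1:ℕ):ℝ) = ((α+2) + 2*(k:ℝ)) + 1 by push_cast; ring,
      Real.rpow_add_one (ne_of_gt ht),
      show α + ((k+1:ℕ):ℝ) + 1 = α + (k:ℝ) + 2 by push_cast; ring,
      show (α+1) + ((k+1:ℕ):ℝ) + 1 = (α + (k:ℝ) + 2) + 1 by push_cast; ring,
      show (α+2) + (k:ℝ) + 1 = (α + (k:ℝ) + 2) + 1 by push_cast; ring,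
      Real.Gamma_add_one (s := α + (k:ℝ) + 2) h2, hf']
    field_simp
    ring
  have k0 : bt α z 0 - (2*(α+1)/z) * bt (α+1) z 0 = 0 := by
    have hg : Real.Gamma (α + 1) ≠ 0 := ne_of_gt (Real.Gamma_pos_of_pos (by linarith))
    have h1 : α + 1 ≠ 0 := ne_of_gt (by linarith)
    unfold bt
    simp only [Nat.cast_zero, Nat.factorial_zero, Nat.cast_one]
    rw [show α + 2*(0:ℝ) = α by ring, show (α+1) + 2*(0:ℝ) = α + 1 by ring,
      Real.rpow_add_one (ne_of_gt (show (0:ℝ) < z/2 by linarith)),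
      show α + (0:ℝ) + 1 = α + 1 by ring,
      show (α+1) + (0:ℝ) + 1 = (α+1) + 1 by ring,
      Real.Gamma_add_one (s := α + 1) h1]
    field_simp
    ring
  have hdiff : Summable (fun k => bt α z k - (2*(α+1)/z) * bt (α+1) z k) :=
    hs1.sub (hs2.mul_left _)
  have : besselI α z - (2*(α+1)/z) * besselI (α+1) z = besselI (α+2) z := by
    rw [besselI_eq_tsum, besselI_eq_tsum, besselI_eq_tsum, ← _root_.tsum_mul_left,
      ← Summable.tsum_sub hs1 (hs2.mul_left _), Summable.tsum_eq_zero_add hdiff, k0]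
    simp only [key]
    simp
  linarith

lemma mono_aux {z : ℝ} (hz : 0 < z) :
    ∀ n : ℕ, ∀ ν : ℝ, 0 ≤ ν → z^2/4 - 1 - 2*n ≤ ν →
      (ν + Real.sqrt (ν^2 + z^2)) * besselI (ν+1) z ≤ z * besselI ν z := by
  intro n
  induction n with
  | zero =>
    intro ν hν hb
    have hz4 : z^2 ≤ 4*ν + 4 := by push_cast at hb; nlinarith
    have hs : Real.sqrt (ν^2 + z^2) ≤ ν + 2 := by
      rw [show ν + 2 = Real.sqrt ((ν+2)^2) by rw [Real.sqrt_sq (by linarith)]]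
      exact Real.sqrt_le_sqrt (by nlinarith)
    have hc := besselI_crude (μ := ν) (by linarith) hz
    have hp1 : 0 < besselI (ν+1) z := besselI_pos (by linarith) hz
    have h2 : 2*(ν+1) * besselI (ν+1) z ≤ z * besselI ν z := by
      rw [div_mul_eq_mul_div, le_div_iff₀ (by linarith)] at hc
      linarith [hc]
    nlinarith [hp1, hs]
  | succ n ih =>
    intro ν hν hb
    set s := Real.sqrt (ν^2 + z^2) with hsdef
    set s2 := Real.sqrt ((ν+2)^2 + z^2) with hs2def
    have hspos : 0 ≤ s := Real.sqrt_nonneg _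
    have hs2pos : 0 ≤ s2 := Real.sqrt_nonneg _
    have hs : s^2 = ν^2 + z^2 := Real.sq_sqrt (by positivity)
    have hs2 : s2^2 = (ν+2)^2 + z^2 := Real.sq_sqrt (by positivity)
    have hss2 : s ≤ s2 := Real.sqrt_le_sqrt (by nlinarith)
    have hs2z : z ≤ s2 := by nlinarith
    set B := ν + 2 + s2 with hBdef
    have hBpos : 0 < B := by positivity
    have hp1 : 0 < besselI (ν+1) z := besselI_pos (by linarith) hz
    have hp2 : 0 < besselI (ν+2) z := besselI_pos (by linarith) hz
    have hp3 : 0 < besselI (ν+3) z := besselI_pos (by linarith) hz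
    -- IH at ν+2
    have ihv : (ν + 2 + s2) * besselI (ν+2+1) z ≤ z * besselI (ν+2) z := by
      have := ih (ν+2) (by linarith) (by push_cast at hb ⊢; linarith)
      simpa using this
    rw [show ν+2+1 = ν+3 by ring, ← hBdef] at ihv
    -- recurrence at ν+1 : L(ν+1)
    have r2 := besselI_rec (α := ν+1) (by linarith) hz
    rw [show ν+1+2 = ν+3 by ring, show ν+1+1 = ν+2 by ring] at r2
    have L1 : z * besselI (ν+1) z ≤ B * besselI (ν+2) z := by
      have h1 : z * B * besselI (ν+1) z
          = z * B * besselI (ν+3) z + 2*(ν+2) * B * besselI (ν+2) z := by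
        rw [r2]; field_simp
      have h2 : z * (B * besselI (ν+3) z) ≤ z * (z * besselI (ν+2) z) :=
        mul_le_mul_of_nonneg_left ihv hz.le
      have hB2 : z^2 + 2*(ν+2)*B = B^2 := by
        rw [hBdef]; nlinarith [hs2]
      have h3' : (z^2 + 2*(ν+2)*B) * besselI (ν+2) z = B^2 * besselI (ν+2) z := by
        rw [hB2]
      have h3 : B * (z * besselI (ν+1) z) ≤ B * (B * besselI (ν+2) z) := by
        nlinarith [h1, h2, h3']
      exact le_of_mul_le_mul_left h3 hBpos
    -- key scalar inequality
    have key : (s - ν - 2) * B ≤ z^2 := by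
      rcases le_or_gt s (ν+2) with h | h
      · nlinarith [hBpos]
      · have e1 : (s - ν - 2) * (s + ν + 2) = z^2 - 4*ν - 4 := by linear_combination hs
        have e2 : (s2 - s) * (s2 + s) = 4*ν + 4 := by linear_combination hs2 - hs
        have hq : 0 ≤ (s2 - s) * ((s2 + s) * (ν + 2 + s2) - z^2) := by
          apply mul_nonneg (by linarith)
          nlinarith [hs2z, hspos, hs2pos]
        have hq2 : z^2 * (s2 - s) ≤ (4*ν+4) * (ν + 2 + s2) := by
          nlinarith [hq, e2, hspos, hs2pos]
        have hmul : ((s - ν - 2) * B) * (s + ν + 2) ≤ z^2 * (s + ν + 2) := by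
          have expand : ((s - ν - 2) * B) * (s + ν + 2) = (z^2 - 4*ν - 4) * B := by
            rw [hBdef]; linear_combination (ν + 2 + s2) * e1
          rw [expand, hBdef]
          nlinarith [hq2]
        exact le_of_mul_le_mul_right hmul (by linarith)
    -- conclude
    have r1 := besselI_rec (α := ν) (by linarith) hz
    have h4 : (z^2 + 2*(ν+1)*B) * besselI (ν+1) z ≤ z * B * besselI ν z := by
      have h5 : z * B * besselI ν z
          = z * B * besselI (ν+2) z + 2*(ν+1) * B * besselI (ν+1) z := by
        rw [r1]; field_simp
      have h6 : z * (z * besselI (ν+1) z) ≤ z * (B * besselI (ν+2) z) :=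
        mul_le_mul_of_nonneg_left L1 hz.le
      nlinarith [h5, h6]
    have h7 : (ν + s) * B * besselI (ν+1) z ≤ (z^2 + 2*(ν+1)*B) * besselI (ν+1) z := by
      apply mul_le_mul_of_nonneg_right _ hp1.le
      nlinarith [key]
    have h8 : B * ((ν + s) * besselI (ν+1) z) ≤ B * (z * besselI ν z) := by
      calc B * ((ν + s) * besselI (ν+1) z) = (ν + s) * B * besselI (ν+1) z := by ring
        _ ≤ (z^2 + 2*(ν+1)*B) * besselI (ν+1) z := h7
        _ ≤ z * B * besselI ν z := h4
        _ = B * (z * besselI ν z) := by ring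
    exact le_of_mul_le_mul_left h8 hBpos

lemma besselI_anti {ν z : ℝ} (hν : 0 ≤ ν) (hz : 0 < z) :
    besselI (ν+1) z ≤ besselI ν z := by
  have h := mono_aux hz ⌈z^2/4⌉₊ ν hν (by
    have := Nat.le_ceil (z^2/4)
    push_cast at this ⊢
    linarith)
  have hs : z ≤ ν + Real.sqrt (ν^2 + z^2) := by
    have : z ≤ Real.sqrt (ν^2 + z^2) := by
      have h1 : Real.sqrt (z^2) ≤ Real.sqrt (ν^2 + z^2) := Real.sqrt_le_sqrt (by nlinarith)
      rwa [Real.sqrt_sq hz.le] at h1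
    linarith
  have hp1 : 0 < besselI (ν+1) z := besselI_pos (by linarith) hz
  have : z * besselI (ν+1) z ≤ z * besselI ν z :=
    le_trans (by nlinarith [hp1, hs]) h
  exact le_of_mul_le_mul_left this hz

/-- `|I_α(z) - I_{α+1}(z)| < (4α+6) I_{α+1}(z)/z` for `α > -1`, `z > 0`. -/
theorem besselI_difference_bound (α : ℝ) (hα : -1 < α) (z : ℝ) (hz : 0 < z) :
    |besselI α z - besselI (α + 1) z| < (4 * α + 6) * besselI (α + 1) z / z := by

  have hp1 : 0 < besselI (α+1) z := besselI_pos (by linarith) hz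
  have hp2 : 0 < besselI (α+2) z := besselI_pos (by linarith) hz
  have hp3 : 0 < besselI (α+3) z := besselI_pos (by linarith) hz
  have r1 := besselI_rec hα hz
  have r2 := besselI_rec (α := α+1) (by linarith) hz
  rw [show α+1+2 = α+3 by ring, show α+1+1 = α+2 by ring] at r2
  have M1 : besselI (α+2) z ≤ besselI (α+1) z := by
    have := besselI_anti (ν := α+1) (by linarith) hz
    rwa [show α+1+1 = α+2 by ring] at this
  have M2 : besselI (α+3) z ≤ besselI (α+2) z := by
    have := besselI_anti (ν := α+2) (by linarith) hz
    rwa [show α+2+1 = α+3 by ring] at this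
  have r1' : z * besselI α z = z * besselI (α+2) z + 2*(α+1) * besselI (α+1) z := by
    rw [r1]; field_simp
  have r2' : z * besselI (α+1) z = z * besselI (α+3) z + 2*(α+2) * besselI (α+2) z := by
    rw [r2]; field_simp
  rw [abs_sub_lt_iff]
  constructor
  · rw [lt_div_iff₀ hz]
    nlinarith [r1', mul_nonneg hz.le (sub_nonneg.2 M1),
      mul_pos (show (0:ℝ) < 2*α+4 by linarith) hp1]
  · rw [lt_div_iff₀ hz]
    nlinarith [r1', r2', mul_nonneg hz.le (sub_nonneg.2 M2),
      mul_nonneg (show (0:ℝ) ≤ 2*α+4 by linarith) (sub_nonneg.2 M1),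
      mul_pos (show (0:ℝ) < 4*α+4 by linarith) hp1]

end
end

section
/- Let ν > −1. For all t > 0 and all x, y ∈ (0,∞), with r = e^{−4t} and δ = ∂_x + x − (ν + 1/2)/x acting in the x-variable, one has the identity δ p_t^ν(x,y) = x p_t^ν(x,y) − ((1+r)/(1−r)) x p_t^ν(x,y) + (2 r^{1/2}/(1−r)) y p_t^{ν+1}(x,y), where p_t^{ν+1} is the Laguerre heat kernel of order ν + 1. -/
open MeasureTheory Real Set ENNReal NNReal

noncomputable section

lemma myGamma_pos (α : ℝ) (hα : -1 < α) (k : ℕ) : 0 < Real.Gamma (α + k + 1) :=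
  Real.Gamma_pos_of_pos (by have : (0:ℝ) ≤ k := Nat.cast_nonneg k; linarith)

lemma summable_aux (α : ℝ) (hα : -1 < α) (a w : ℝ) (ha : 0 ≤ a) (hw : 0 ≤ w) :
    Summable (fun k : ℕ => (a + 2*(k:ℝ) + 1) * w^k / (k.factorial * Real.Gamma (α+(k:ℝ)+1))) := by
  apply summable_of_ratio_norm_eventually_le (r := 1/2) (by norm_num)
  obtain ⟨K, hK⟩ := exists_nat_ge (max (max 1 |α|) (4*w))
  filter_upwards [Filter.eventually_ge_atTop K] with n hn
  have hnK : (K:ℝ) ≤ (n:ℝ) := Nat.cast_le.2 hn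
  have h1 : 1 ≤ (n:ℝ) := (((le_max_left 1 |α|).trans (le_max_left _ _)).trans hK).trans hnK
  have h2 : |α| ≤ (n:ℝ) := (((le_max_right 1 |α|).trans (le_max_left _ _)).trans hK).trans hnK
  have h3 : 4*w ≤ (n:ℝ) := ((le_max_right _ _).trans hK).trans hnK
  have hG : 0 < Real.Gamma (α + (n:ℝ) + 1) := myGamma_pos α hα n
  have hG' : Real.Gamma (α + ((n:ℝ)+1) + 1) = (α + n + 1) * Real.Gamma (α + n + 1) := by
    have : α + ((n:ℝ)+1) + 1 = (α + n + 1) + 1 := by ring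
    rw [this, Real.Gamma_add_one (by nlinarith [abs_nonneg α, neg_abs_le α])]
  have hF : (0:ℝ) < n.factorial := by exact_mod_cast n.factorial_pos
  have hnn : 0 ≤ (a + 2*(n:ℝ) + 1) * w^n / (n.factorial * Real.Gamma (α+(n:ℝ)+1)) := by
    positivity
  have hnn' : 0 ≤ (a + 2*((n:ℝ)+1) + 1) * w^(n+1) / ((n+1).factorial * Real.Gamma (α+((n:ℝ)+1)+1)) := by
    have := myGamma_pos α hα (n+1)
    push_cast at this
    have hF' : (0:ℝ) < (n+1).factorial := by exact_mod_cast (n+1).factorial_pos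
    positivity
  rw [Real.norm_of_nonneg (by push_cast; exact hnn'), Real.norm_of_nonneg hnn]
  push_cast
  have heq : (1:ℝ)/2 * ((a + 2*(n:ℝ) + 1) * w^n / (n.factorial * Real.Gamma (α+(n:ℝ)+1)))
      = ((a + 2*(n:ℝ) + 1) * w^n) / (2 * (n.factorial * Real.Gamma (α+(n:ℝ)+1))) := by ring
  rw [heq, Nat.factorial_succ, hG']
  have habs : -|α| ≤ α := neg_abs_le α
  have hα1 : 1 ≤ α + (n:ℝ) + 1 := by linarith
  rw [div_le_div_iff₀ (by push_cast; exact mul_pos (mul_pos (by linarith) hF) (mul_pos (by linarith) hG)) (by positivity)]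
  push_cast
  have key : (a + 2*((n:ℝ)+1) + 1) * w * 2 ≤ (a + 2*n + 1) * (((n:ℝ)+1) * (α + n + 1)) := by
    have e1 : (a + 2*((n:ℝ)+1) + 1) * w * 2 ≤ (a+2*(n:ℝ)+1) * (4*w) := by
      nlinarith [mul_nonneg hw (show (0:ℝ) ≤ a+2*(n:ℝ)-1 by linarith)]
    have e2 : (a+2*(n:ℝ)+1)*(4*w) ≤ (a+2*(n:ℝ)+1)*((n:ℝ)) :=
      mul_le_mul_of_nonneg_left h3 (by linarith)
    have e3 : (n:ℝ) ≤ ((n:ℝ)+1)*(α+(n:ℝ)+1) := by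
      nlinarith [mul_le_mul_of_nonneg_left hα1 (show (0:ℝ) ≤ (n:ℝ) by linarith)]
    have e4 : (a+2*(n:ℝ)+1)*((n:ℝ)) ≤ (a+2*(n:ℝ)+1)*(((n:ℝ)+1)*(α+(n:ℝ)+1)) :=
      mul_le_mul_of_nonneg_left e3 (by linarith)
    linarith
  have hwn : 0 ≤ w^n := pow_nonneg hw n
  have hrest : 0 ≤ (n.factorial:ℝ) * Real.Gamma (α + n + 1) := by positivity
  calc (a + 2*((n:ℝ)+1) + 1) * w^(n+1) * (2 * ((n.factorial:ℝ) * Real.Gamma (α+n+1)))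
      = ((a + 2*((n:ℝ)+1) + 1) * w * 2) * (w^n * ((n.factorial:ℝ) * Real.Gamma (α+n+1))) := by
        rw [pow_succ]; ring
    _ ≤ ((a + 2*n + 1) * (((n:ℝ)+1) * (α + n + 1))) * (w^n * ((n.factorial:ℝ) * Real.Gamma (α+n+1))) := by
        apply mul_le_mul_of_nonneg_right key (by positivity)
    _ = (a + 2*(n:ℝ) + 1) * w^n * ((((n:ℝ)+1) * (n.factorial:ℝ)) * ((α + (n:ℝ) + 1) * Real.Gamma (α+n+1))) := by
        ring

lemma rpow_two_mul_nat (c : ℝ) (hc : 0 < c) (k : ℕ) : c ^ (2 * (k:ℝ)) = (c^2)^k := by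
  have : (2 * (k:ℝ)) = ((2*k : ℕ) : ℝ) := by push_cast; ring
  rw [this, Real.rpow_natCast, pow_mul]

lemma besselI_summable (α : ℝ) (hα : -1 < α) (z : ℝ) (hz : 0 < z) :
    Summable (fun k : ℕ =>
      (z/2) ^ (α + 2*(k:ℝ)) / ((k.factorial : ℝ) * Real.Gamma (α + (k:ℝ) + 1))) := by
  have hz2 : (0:ℝ) < z/2 := by linarith
  have hg : Summable (fun k : ℕ => (z/2)^α *
      ((0 + 2*(k:ℝ) + 1) * ((z/2)^2)^k / (k.factorial * Real.Gamma (α+(k:ℝ)+1)))) :=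
    (summable_aux α hα 0 ((z/2)^2) le_rfl (by positivity)).mul_left _
  refine Summable.of_nonneg_of_le (fun k => le_of_lt (div_pos (Real.rpow_pos_of_pos hz2 _)
    (mul_pos (by exact_mod_cast k.factorial_pos) (myGamma_pos α hα k)))) (fun k => ?_) hg
  have hG := myGamma_pos α hα k
  have hsplit : (z/2) ^ (α + 2*(k:ℝ)) = (z/2)^α * ((z/2)^2)^k := by
    rw [Real.rpow_add hz2, rpow_two_mul_nat _ hz2]
  rw [hsplit]
  rw [mul_div_assoc, mul_div_assoc]
  apply mul_le_mul_of_nonneg_left _ (le_of_lt (Real.rpow_pos_of_pos hz2 α))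
  apply le_mul_of_one_le_left (div_nonneg (by positivity) (le_of_lt (mul_pos (by exact_mod_cast k.factorial_pos) hG)))
  have : (0:ℝ) ≤ 2*(k:ℝ) := by positivity
  linarith

lemma besselI_shift (α : ℝ) (hα : -1 < α) (z : ℝ) (hz : 0 < z)
    (hsum : Summable (fun k : ℕ =>
      (k:ℝ) * (z/2) ^ (α + 2*(k:ℝ) - 1) / ((k.factorial : ℝ) * Real.Gamma (α + (k:ℝ) + 1)))) :
    ∑' k : ℕ, (k:ℝ) * (z/2) ^ (α + 2*(k:ℝ) - 1) / ((k.factorial : ℝ) * Real.Gamma (α + (k:ℝ) + 1))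
      = besselI (α+1) z := by
  rw [Summable.tsum_eq_zero_add hsum]
  simp only [Nat.cast_zero, zero_mul, zero_div, zero_add]
  unfold besselI
  apply tsum_congr
  intro k
  have hz2 : (0:ℝ) < z/2 := by linarith
  have hG := myGamma_pos α hα (k+1)
  have hFk : ((k.factorial : ℝ)) ≠ 0 := by exact_mod_cast k.factorial_ne_zero
  have he : α + 2*((k:ℝ)+1) - 1 = (α+1) + 2*(k:ℝ) := by ring
  have he2 : α + ((k:ℝ)+1) + 1 = (α+1) + (k:ℝ) + 1 := by ring
  push_cast
  rw [he, he2, Nat.factorial_succ]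
  push_cast
  have hk1 : ((k:ℝ)+1) ≠ 0 := by positivity
  have hGne : Real.Gamma ((α+1) + (k:ℝ) + 1) ≠ 0 := by
    have := myGamma_pos (α+1) (by linarith) k; linarith
  field_simp

lemma besselI_hasDerivAt (α : ℝ) (hα : -1 < α) (z : ℝ) (hz : 0 < z) :
    HasDerivAt (besselI α) (besselI (α+1) z + α / z * besselI α z) z := by
  set g : ℕ → ℝ → ℝ := fun k u =>
    (u/2) ^ (α + 2*(k:ℝ)) / ((k.factorial : ℝ) * Real.Gamma (α + (k:ℝ) + 1)) with hg_def
  set g' : ℕ → ℝ → ℝ := fun k u =>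
    ((α + 2*(k:ℝ)) * (u/2) ^ (α + 2*(k:ℝ) - 1) * (1/2)) /
      ((k.factorial : ℝ) * Real.Gamma (α + (k:ℝ) + 1)) with hg'_def
  set B : ℝ := (z/4) ^ (α-1) + z ^ (α-1) with hB_def
  set u : ℕ → ℝ := fun k =>
    (B/2) * ((|α| + 2*(k:ℝ) + 1) * (z^2)^k / ((k.factorial : ℝ) * Real.Gamma (α + (k:ℝ) + 1)))
    with hu_def
  have hz4 : (0:ℝ) < z/4 := by linarith
  have hB : 0 < B := by
    have := Real.rpow_pos_of_pos hz4 (α-1); have := Real.rpow_pos_of_pos hz (α-1); positivity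
  have hu : Summable u := (summable_aux α hα |α| (z^2) (abs_nonneg α) (by positivity)).mul_left _
  have hopen : IsOpen (Set.Ioo (z/2) (2*z)) := isOpen_Ioo
  have hconn : IsPreconnected (Set.Ioo (z/2) (2*z)) := isPreconnected_Ioo
  have hmem : z ∈ Set.Ioo (z/2) (2*z) := ⟨by linarith, by linarith⟩
  have hgd : ∀ (k : ℕ), ∀ x ∈ Set.Ioo (z/2) (2*z), HasDerivAt (g k) (g' k x) x := by
    intro k x hx
    have hx0 : (0:ℝ) < x := lt_trans (by linarith) hx.1
    have hhalf : HasDerivAt (fun v : ℝ => v/2) (1/2) x := (hasDerivAt_id x).div_const 2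
    have hrpow : HasDerivAt (fun v : ℝ => v ^ (α + 2*(k:ℝ)))
        ((α + 2*(k:ℝ)) * (x/2) ^ (α + 2*(k:ℝ) - 1)) (x/2) :=
      Real.hasDerivAt_rpow_const (Or.inl (by positivity))
    exact ((hrpow.comp x hhalf).div_const _)
  have hgb : ∀ (k : ℕ), ∀ x ∈ Set.Ioo (z/2) (2*z), ‖g' k x‖ ≤ u k := by
    intro k x hx
    have hx0 : (0:ℝ) < x := lt_trans (by linarith) hx.1
    have hx2 : (0:ℝ) < x/2 := by linarith
    have hG := myGamma_pos α hα k
    have hFk : (0:ℝ) < (k.factorial : ℝ) := by exact_mod_cast k.factorial_pos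
    have hsplit : (x/2) ^ (α + 2*(k:ℝ) - 1) = (x/2)^(α-1) * ((x/2)^2)^k := by
      have : α + 2*(k:ℝ) - 1 = (α-1) + 2*(k:ℝ) := by ring
      rw [this, Real.rpow_add hx2, rpow_two_mul_nat _ hx2]
    have hb1 : |α + 2*(k:ℝ)| ≤ |α| + 2*(k:ℝ) + 1 := by
      have := abs_add_le α (2*(k:ℝ))
      have h2 : |2*(k:ℝ)| = 2*(k:ℝ) := abs_of_nonneg (by positivity)
      linarith
    have hb2 : (x/2)^(α-1) ≤ B := by
      rcases le_or_gt 0 (α-1) with h | h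
      · have : (x/2)^(α-1) ≤ z^(α-1) :=
          Real.rpow_le_rpow (le_of_lt hx2) (by linarith [hx.2]) h
        have := Real.rpow_pos_of_pos hz4 (α-1)
        rw [hB_def]; linarith
      · have : (x/2)^(α-1) ≤ (z/4)^(α-1) :=
          Real.rpow_le_rpow_of_nonpos hz4 (by linarith [hx.1]) (le_of_lt h)
        have := Real.rpow_pos_of_pos hz (α-1)
        rw [hB_def]; linarith
    have hb3 : ((x/2)^2)^k ≤ (z^2)^k := by
      apply pow_le_pow_left₀ (sq_nonneg _)
      nlinarith [hx.2]
    have hnorm : ‖g' k x‖ = |α + 2*(k:ℝ)| * ((x/2)^(α-1) * ((x/2)^2)^k) * (1/2) /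
        ((k.factorial : ℝ) * Real.Gamma (α + (k:ℝ) + 1)) := by
      rw [hg'_def]
      simp only []
      rw [Real.norm_eq_abs, abs_div, abs_of_pos (mul_pos hFk hG), abs_mul, abs_mul,
        abs_of_pos (Real.rpow_pos_of_pos hx2 _), abs_of_pos (by norm_num : (0:ℝ) < 1/2), hsplit]
    rw [hnorm, hu_def]
    have hpow_pos : (0:ℝ) < (x/2)^(α-1) := Real.rpow_pos_of_pos hx2 _
    have hpk : (0:ℝ) ≤ ((x/2)^2)^k := by positivity
    calc |α + 2*(k:ℝ)| * ((x/2)^(α-1) * ((x/2)^2)^k) * (1/2) /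
        ((k.factorial : ℝ) * Real.Gamma (α + (k:ℝ) + 1))
        ≤ (|α| + 2*(k:ℝ) + 1) * (B * (z^2)^k) * (1/2) /
          ((k.factorial : ℝ) * Real.Gamma (α + (k:ℝ) + 1)) := by
          have hnum : |α + 2*(k:ℝ)| * ((x/2)^(α-1) * ((x/2)^2)^k) * (1/2)
              ≤ (|α| + 2*(k:ℝ) + 1) * (B * (z^2)^k) * (1/2) := by
            apply mul_le_mul_of_nonneg_right _ (by norm_num)
            apply mul_le_mul hb1 _ (by positivity) (by positivity)
            exact mul_le_mul hb2 hb3 hpk (le_of_lt hB)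
          exact (div_le_div_iff_of_pos_right (mul_pos hFk hG)).mpr hnum
      _ = (B/2) * ((|α| + 2*(k:ℝ) + 1) * (z^2)^k /
            ((k.factorial : ℝ) * Real.Gamma (α + (k:ℝ) + 1))) := by ring
  have hg0 : Summable (fun k => g k z) := besselI_summable α hα z hz
  have hmain : HasDerivAt (fun v => ∑' k, g k v) (∑' k, g' k z) z :=
    hasDerivAt_tsum_of_isPreconnected hu hopen hconn hgd hgb hmem hg0 hmem
  have hgsum : Summable (fun k => g' k z) :=
    Summable.of_norm_bounded hu (fun k => hgb k z hmem)
  -- split g' k z = e k + f k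
  have hz2 : (0:ℝ) < z/2 := by linarith
  set e : ℕ → ℝ := fun k =>
    (k:ℝ) * (z/2) ^ (α + 2*(k:ℝ) - 1) / ((k.factorial : ℝ) * Real.Gamma (α + (k:ℝ) + 1)) with he_def
  set f : ℕ → ℝ := fun k =>
    (α / z) * ((z/2) ^ (α + 2*(k:ℝ)) / ((k.factorial : ℝ) * Real.Gamma (α + (k:ℝ) + 1))) with hf_def
  have hterm : ∀ k, g' k z = e k + f k := by
    intro k
    rw [hg'_def, he_def, hf_def]
    simp only []
    have hpow : (z/2) ^ (α + 2*(k:ℝ)) = (z/2) ^ (α + 2*(k:ℝ) - 1) * (z/2) := by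
      have h1 : α + 2*(k:ℝ) = (α + 2*(k:ℝ) - 1) + 1 := by ring
      rw [h1, Real.rpow_add_one (ne_of_gt hz2)]
      ring_nf
    have hzne : z ≠ 0 := ne_of_gt hz
    have hzz : z * z⁻¹ = 1 := mul_inv_cancel₀ hzne
    rw [hpow]
    field_simp
    ring
  have hfsum : Summable f := (besselI_summable α hα z hz).mul_left _
  have hesum : Summable e := by
    have : e = fun k => g' k z - f k := by funext k; rw [hterm k]; ring
    rw [this]; exact hgsum.sub hfsum
  have htsum : ∑' k, g' k z = besselI (α+1) z + α / z * besselI α z := by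
    rw [tsum_congr hterm, Summable.tsum_add hesum hfsum, besselI_shift α hα z hz hesum, hf_def]
    simp only []
    rw [_root_.tsum_mul_left]
    rfl
  rw [← htsum]
  exact hmain

/-- the identity
`δ p_t^ν(x,y) = x p_t^ν(x,y) - ((1+r)/(1-r)) x p_t^ν(x,y) + (2√r/(1-r)) y p_t^{ν+1}(x,y)`
with `r = e^{-4t}`. -/
theorem delta_heat_kernel_identity (ν : ℝ) (hν : -1 < ν) (t x y : ℝ)
    (ht : 0 < t) (hx : 0 < x) (hy : 0 < y) :
    deltaHeat1 ν t x y =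
      x * heatKernel ν t x y
        - ((1 + Real.exp (-(4 * t))) / (1 - Real.exp (-(4 * t)))) * x * heatKernel ν t x y
        + (2 * Real.sqrt (Real.exp (-(4 * t))) / (1 - Real.exp (-(4 * t)))) * y *
            heatKernel (ν + 1) t x y := by
  set r : ℝ := Real.exp (-(4 * t)) with hr_def
  have hr0 : 0 < r := Real.exp_pos _
  have hr1 : r < 1 := by
    rw [hr_def, Real.exp_lt_one_iff]; linarith
  have h1r : 0 < 1 - r := by linarith
  have h1rne : (1 - r) ≠ 0 := ne_of_gt h1r
  set sr : ℝ := Real.sqrt r with hsr_def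
  have hsr : 0 < sr := Real.sqrt_pos.2 hr0
  set s : ℝ := Real.sqrt (r * x * y) with hs_def
  have hs : 0 < s := Real.sqrt_pos.2 (by positivity)
  have hs2 : s ^ 2 = r * x * y := Real.sq_sqrt (by positivity)
  have hbxy : 0 < 2 * sr / (1 - r) * (x * y) := by positivity
  -- derivative of the first factor
  have hF : HasDerivAt (fun u : ℝ => 2 * Real.sqrt (r * u * y) / (1 - r))
      (2 * ((r * y) * (1 / (2 * s))) / (1 - r)) x := by
    have hinner : HasDerivAt (fun u : ℝ => r * u * y) (r * y) x := by
      simpa using ((hasDerivAt_id x).const_mul r).mul_const y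
    have hsqrt : HasDerivAt Real.sqrt (1 / (2 * Real.sqrt (r * x * y))) (r * x * y) :=
      Real.hasDerivAt_sqrt (by positivity)
    have hcomp := hsqrt.comp x hinner
    have := (hcomp.const_mul 2).div_const (1 - r)
    rw [show (2 * ((r * y) * (1 / (2 * s))) / (1 - r)) = 2 * (1 / (2 * √(r * x * y)) * (r * y)) / (1 - r) by rw [hs_def]; ring]
    exact this
  -- derivative of the exponential factor
  have hG : HasDerivAt (fun u : ℝ => Real.exp (-(1 / 2) * ((1 + r) / (1 - r)) * (u ^ 2 + y ^ 2)))
      (Real.exp (-(1 / 2) * ((1 + r) / (1 - r)) * (x ^ 2 + y ^ 2)) *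
        (-(1 / 2) * ((1 + r) / (1 - r)) * (2 * x))) x := by
    have hinner : HasDerivAt (fun u : ℝ => -(1 / 2) * ((1 + r) / (1 - r)) * (u ^ 2 + y ^ 2))
        (-(1 / 2) * ((1 + r) / (1 - r)) * (2 * x)) x := by
      have := ((hasDerivAt_pow 2 x).add_const (y ^ 2)).const_mul (-(1 / 2) * ((1 + r) / (1 - r)))
      simpa using this
    exact hinner.exp
  -- derivative of the Bessel factor
  have hH : HasDerivAt (fun u : ℝ => besselI ν (2 * sr / (1 - r) * (u * y)))
      ((besselI (ν + 1) (2 * sr / (1 - r) * (x * y)) +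
        ν / (2 * sr / (1 - r) * (x * y)) * besselI ν (2 * sr / (1 - r) * (x * y))) *
        (2 * sr / (1 - r) * y)) x := by
    have hinner : HasDerivAt (fun u : ℝ => 2 * sr / (1 - r) * (u * y)) (2 * sr / (1 - r) * y) x := by
      simpa using (((hasDerivAt_id x).mul_const y).const_mul (2 * sr / (1 - r)))
    exact (besselI_hasDerivAt ν hν _ hbxy).comp x hinner
  have hp := (hF.mul hG).mul hH
  simp only [Pi.mul_def] at hp
  have hfun : (fun u => heatKernel ν t u y) =
      (fun u : ℝ => 2 * Real.sqrt (r * u * y) / (1 - r) *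
        Real.exp (-(1 / 2) * ((1 + r) / (1 - r)) * (u ^ 2 + y ^ 2)) *
        besselI ν (2 * sr / (1 - r) * (u * y))) := by
    funext u; rw [heatKernel]
  rw [deltaHeat1, hfun, hp.deriv, heatKernel, heatKernel]
  rw [← hs_def, ← hsr_def, ← hr_def]
  set E := Real.exp (-(1 / 2) * ((1 + r) / (1 - r)) * (x ^ 2 + y ^ 2)) with hE_def
  set I0 := besselI ν (2 * sr / (1 - r) * (x * y)) with hI0_def
  set I1 := besselI (ν + 1) (2 * sr / (1 - r) * (x * y)) with hI1_def
  have hxne : x ≠ 0 := ne_of_gt hx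
  have hyne : y ≠ 0 := ne_of_gt hy
  have hsne : s ≠ 0 := ne_of_gt hs
  have hsrne : sr ≠ 0 := ne_of_gt hsr
  have hry : r * y = s ^ 2 / x := by rw [hs2]; field_simp
  rw [hry]
  field_simp
  ring


end
end
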